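/- Let b : ℝ × ℝⁿ → ℝⁿ be a C¹ time-dependent vector field, globally Lipschitz in z with flow Φ(t; 0, ·), and suppose there is a constant c such that div_z b(t, z) = −c for all (t, z). Let f⁰ : ℝⁿ → ℝ be C¹. Then the function f(t, z) := e^{c t} f⁰(Φ(0; t, z)) solves the transport equation ∂ₜ f + div_z(b f) = 0 with f(0, ·) = f⁰. -/

import Mathlib

/-!
By the flow law `Φ(0; τ, z) = Φ(0; t, Φ(t; τ, z))` and `∂_τ Φ(t; τ, z)|_{τ = t} = -b(t, z)`, the
function `f(τ, z) = e^{cτ} f⁰(Φ(0; τ, z))` satisfies `∂ₜ f = c f - ∇f · b`, while the Leibniz rule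
`div (b f) = ∇f · b + f div b` and `div b = -c` give `div (b f) = ∇f · b - c f`.

The analytic input is the differentiability of `z ↦ Φ(s; t, z)`. Its derivative is the solution
`W` of the linearized equation `W' = ∂_z b(s, Φ(s; t, z)) W`, `W(t) = 1`, which exists for all
times as a Dyson series. The error `Φ(s; t, z + h) - Φ(s; t, z) - W(s) h` solves a linear equation
forced by the Taylor remainder of `b`, which is uniformly small along the compact trajectory, so it
is `o(h)` by Grönwall. Backward times reduce to forward ones by reversing time.
-/

open Set Filter Topology Asymptotics Real Metric

section LinearODE

variable {R : Type*} [NormedRing R] [NormedAlgebra ℝ R]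

noncomputable def dysonTerm (A : ℝ → R) (t₀ : ℝ) (W₀ : R) : ℕ → ℝ → R
  | 0 => fun _ => W₀
  | n + 1 => fun s => ∫ u in t₀..s, A u * dysonTerm A t₀ W₀ n u

variable {A : ℝ → R} {t₀ : ℝ} {W₀ : R}

lemma continuous_dysonTerm (hA : Continuous A) (n : ℕ) : Continuous (dysonTerm A t₀ W₀ n) := by
  induction n with
  | zero => exact continuous_const
  | succ n ih =>
    exact intervalIntegral.continuous_primitive
      (fun _ _ => (hA.mul ih).intervalIntegrable _ _) t₀

lemma hasDerivAt_dysonTerm_succ [CompleteSpace R] (hA : Continuous A) (n : ℕ) (s : ℝ) :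
    HasDerivAt (dysonTerm A t₀ W₀ (n + 1)) (A s * dysonTerm A t₀ W₀ n s) s :=
  have hcont := hA.mul (continuous_dysonTerm hA n)
  intervalIntegral.integral_hasDerivAt_right (hcont.intervalIntegrable _ _)
    (hcont.stronglyMeasurableAtFilter _ _) hcont.continuousAt

lemma norm_dysonTerm_le (hA : Continuous A) {K : ℝ} (hAK : ∀ s, ‖A s‖ ≤ K) (n : ℕ) (s : ℝ) :
    ‖dysonTerm A t₀ W₀ n s‖ ≤ ‖W₀‖ * (K * |s - t₀|) ^ n / n.factorial := by
  induction n generalizing s with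
  | zero => simp [dysonTerm]
  | succ n ih =>
    have hK : 0 ≤ K := (norm_nonneg _).trans (hAK 0)
    have hpointwise : ∀ u, ‖A u * dysonTerm A t₀ W₀ n u‖
        ≤ ‖W₀‖ * K ^ (n + 1) / n.factorial * |u - t₀| ^ n := fun u =>
      calc ‖A u * dysonTerm A t₀ W₀ n u‖ ≤ K * (‖W₀‖ * (K * |u - t₀|) ^ n / n.factorial) :=
            (norm_mul_le _ _).trans (mul_le_mul (hAK u) (ih u) (norm_nonneg _) hK)
        _ = ‖W₀‖ * K ^ (n + 1) / n.factorial * |u - t₀| ^ n := by ring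
    calc ‖dysonTerm A t₀ W₀ (n + 1) s‖
        ≤ ∫ u in uIoc t₀ s, ‖W₀‖ * K ^ (n + 1) / n.factorial * |u - t₀| ^ n :=
          intervalIntegral.norm_integral_le_integral_norm_uIoc.trans <|
            MeasureTheory.setIntegral_mono_on
              (hA.mul (continuous_dysonTerm hA n)).norm.integrableOn_uIoc
              (by fun_prop : Continuous fun u => _).integrableOn_uIoc measurableSet_uIoc
              fun u _ => hpointwise u
      _ = ‖W₀‖ * (K * |s - t₀|) ^ (n + 1) / (n + 1).factorial := by
          rw [MeasureTheory.integral_const_mul, integral_pow_abs_sub_uIoc, Nat.factorial_succ]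
          push_cast
          field_simp
          ring

lemma summable_dysonTerm [CompleteSpace R] (hA : Continuous A) {K : ℝ} (hAK : ∀ s, ‖A s‖ ≤ K)
    (s : ℝ) :
    Summable fun n => dysonTerm A t₀ W₀ n s :=
  .of_norm_bounded (((Real.summable_pow_div_factorial (K * |s - t₀|)).mul_left ‖W₀‖).congr
    fun n => by ring)
    (norm_dysonTerm_le hA hAK · s)

theorem exists_hasDerivAt_eq_mul [CompleteSpace R] (hA : Continuous A) {K : ℝ}
    (hAK : ∀ s, ‖A s‖ ≤ K) (t₀ : ℝ) (W₀ : R) :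
    ∃ W : ℝ → R, W t₀ = W₀ ∧ ∀ s, HasDerivAt W (A s * W s) s := by
  have hK : 0 ≤ K := (norm_nonneg _).trans (hAK 0)
  have hsum := summable_dysonTerm (t₀ := t₀) (W₀ := W₀) hA hAK
  refine ⟨fun s => ∑' n, dysonTerm A t₀ W₀ n s, ?_, fun s => ?_⟩
  · show ∑' n, _ = _
    rw [(hsum t₀).tsum_eq_zero_add]
    simp [dysonTerm]
  set T := |s - t₀| + 1
  have hdom : ∀ n, ∀ y ∈ Ioo (t₀ - T) (t₀ + T),
      ‖A y * dysonTerm A t₀ W₀ n y‖ ≤ K * (‖W₀‖ * (K * T) ^ n / n.factorial) := by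
    intro n y hy
    refine (norm_mul_le _ _).trans (mul_le_mul (hAK y) ((norm_dysonTerm_le hA hAK n y).trans ?_)
      (norm_nonneg _) hK)
    gcongr
    exact abs_sub_lt_iff.2 ⟨by linarith [hy.2], by linarith [hy.1]⟩ |>.le
  have hderiv := hasDerivAt_tsum_of_isPreconnected
    (((Real.summable_pow_div_factorial (K * T)).mul_left ‖W₀‖ |>.mul_left K).congr fun n => by ring)
    isOpen_Ioo isPreconnected_Ioo (fun n y _ => hasDerivAt_dysonTerm_succ hA n y) hdom
    (y₀ := t₀) (by simp; positivity) ((summable_nat_add_iff 1).2 (hsum t₀))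
    (y := s) ⟨by linarith [neg_abs_le (s - t₀)], by linarith [le_abs_self (s - t₀)]⟩
  rw [(hsum s).tsum_mul_left] at hderiv
  have hshift : (fun y => ∑' n, dysonTerm A t₀ W₀ n y)
      = fun y => W₀ + ∑' n, dysonTerm A t₀ W₀ (n + 1) y := by
    ext y
    rw [(hsum y).tsum_eq_zero_add]
    rfl
  have := hderiv.const_add W₀
  rwa [← hshift] at this

end LinearODE

lemma gronwallBound_zero_eq_mul (K ε x : ℝ) :
    gronwallBound 0 K ε x = ε * gronwallBound 0 K 1 x := by
  rcases eq_or_ne K 0 with rfl | hK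
  · simp [gronwallBound_K0]
  · simp only [gronwallBound_of_K_ne_0 hK]
    ring

lemma mul_gronwallBound_zero_one (K x : ℝ) : K * gronwallBound 0 K 1 x = exp (K * x) - 1 := by
  rcases eq_or_ne K 0 with rfl | hK
  · simp
  · rw [gronwallBound_of_K_ne_0 hK]
    field_simp
    ring

lemma norm_le_gronwallBound_of_hasDerivAt {E : Type*} [NormedAddCommGroup E] [NormedSpace ℝ E]
    {f f' : ℝ → E} {δ K ε a b : ℝ} (hab : a ≤ b) (hf : ∀ x, HasDerivAt f (f' x) x)
    (ha : ‖f a‖ ≤ δ) (bound : ∀ x ∈ Ico a b, ‖f' x‖ ≤ K * ‖f x‖ + ε) :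
    ‖f b‖ ≤ gronwallBound δ K ε (b - a) :=
  norm_le_gronwallBound_of_norm_deriv_right_le (fun x _ => (hf x).continuousAt.continuousWithinAt)
    (fun x _ => (hf x).hasDerivWithinAt) ha bound b (right_mem_Icc.2 hab)

section PartialDerivative

variable {E F : Type*} [NormedAddCommGroup E] [NormedSpace ℝ E] [NormedAddCommGroup F]
  [NormedSpace ℝ F] {b : ℝ → E → F}

lemma hasFDerivAt_of_contDiff_uncurry (hb : ContDiff ℝ 1 fun p : ℝ × E => b p.1 p.2)
    (s : ℝ) (y : E) :
    HasFDerivAt (b s) ((fderiv ℝ (fun p : ℝ × E => b p.1 p.2) (s, y)).comp (.inr ℝ ℝ E)) y :=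
  ((hb.differentiable one_ne_zero (s, y)).hasFDerivAt).comp y (hasFDerivAt_prodMk_right s y)

lemma continuous_fderiv_of_contDiff_uncurry (hb : ContDiff ℝ 1 fun p : ℝ × E => b p.1 p.2) :
    Continuous fun p : ℝ × E => fderiv ℝ (b p.1) p.2 := by
  simp_rw [fun p : ℝ × E => (hasFDerivAt_of_contDiff_uncurry hb p.1 p.2).fderiv]
  exact (hb.continuous_fderiv one_ne_zero).clm_comp continuous_const

lemma exists_norm_sub_sub_fderiv_le (hb : ContDiff ℝ 1 fun p : ℝ × E => b p.1 p.2)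
    {γ : ℝ → E} (hγ : Continuous γ) {S : Set ℝ} (hS : IsCompact S) {ε : ℝ} (hε : 0 < ε) :
    ∃ δ > 0, ∀ s ∈ S, ∀ v : E, ‖v‖ < δ →
      ‖b s (γ s + v) - b s (γ s) - fderiv ℝ (b s) (γ s) v‖ ≤ ε * ‖v‖ := by
  have hD := continuous_fderiv_of_contDiff_uncurry hb
  obtain ⟨δ, hδ, hunif⟩ := Metric.mem_uniformity_dist.1 <|
    (hS.image (continuous_id.prodMk hγ)).uniformContinuousAt_of_continuousAt _
      (fun p _ => hD.continuousAt) (Metric.dist_mem_uniformity hε)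
  refine ⟨δ, hδ, fun s hs v hv => ?_⟩
  have hclose : ∀ w ∈ ball (γ s) δ, ‖fderiv ℝ (b s) w - fderiv ℝ (b s) (γ s)‖ ≤ ε := by
    intro w hw
    have hdist : dist (s, γ s) (s, w) < δ := by
      simpa [Prod.dist_eq, dist_comm] using hw
    rw [← dist_eq_norm, dist_comm]
    exact (hunif hdist ⟨s, hs, rfl⟩).le
  have hmvt := Convex.norm_image_sub_le_of_norm_hasFDerivWithin_le'
    (fun w _ =>
      (hasFDerivAt_of_contDiff_uncurry hb s w).differentiableAt.hasFDerivAt.hasFDerivWithinAt)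
    hclose (convex_ball _ _) (mem_ball_self hδ) (y := γ s + v) (by simpa using hv)
  rwa [add_sub_cancel_left] at hmvt

end PartialDerivative

section Flow

variable {E F : Type*} [NormedAddCommGroup E] [NormedSpace ℝ E] [NormedAddCommGroup F]
  [NormedSpace ℝ F]

structure IsFlow (b : ℝ → E → E) (Φ : ℝ → ℝ → E → E) : Prop where
  apply_self : ∀ t z, Φ t t z = z
  hasDerivAt : ∀ t z s, HasDerivAt (fun s => Φ s t z) (b s (Φ s t z)) s

namespace IsFlow

variable {b : ℝ → E → E} {Φ : ℝ → ℝ → E → E} {K : NNReal}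

lemma reverse (hΦ : IsFlow b Φ) : IsFlow (fun s z => -b (-s) z) (fun s t => Φ (-s) (-t)) where
  apply_self t z := hΦ.apply_self (-t) z
  hasDerivAt t z s := by
    simpa [Function.comp_def] using (hΦ.hasDerivAt (-t) z (-s)).scomp s (hasDerivAt_neg s)

lemma apply_apply (hΦ : IsFlow b Φ) (hlip : ∀ t, LipschitzWith K (b t)) (s t t' : ℝ) (z : E) :
    Φ s t (Φ t t' z) = Φ s t' z :=
  congrFun (ODE_solution_unique_univ (s := fun _ => univ) (fun t => (hlip t).lipschitzOnWith)
    (fun s => ⟨hΦ.hasDerivAt t (Φ t t' z) s, trivial⟩) (fun s => ⟨hΦ.hasDerivAt t' z s, trivial⟩)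
    (t₀ := t) (by rw [hΦ.apply_self])) s

lemma norm_sub_sub_le_of_le (hΦ : IsFlow b Φ) (hlip : ∀ t, LipschitzWith K (b t)) {τ s : ℝ}
    (hτs : τ ≤ s) (x x' : E) :
    ‖Φ s τ x - x - (Φ s τ x' - x')‖ ≤ (exp (K * (s - τ)) - 1) * ‖x - x'‖ := by
  have hgron := norm_le_gronwallBound_of_hasDerivAt (f := fun σ => Φ σ τ x - x - (Φ σ τ x' - x'))
    (δ := 0) (K := K) (ε := K * ‖x - x'‖) hτs
    (fun σ => ((hΦ.hasDerivAt τ x σ).sub_const x).sub ((hΦ.hasDerivAt τ x' σ).sub_const x'))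
    (by simp [hΦ.apply_self]) fun σ _ => by
      calc ‖b σ (Φ σ τ x) - b σ (Φ σ τ x')‖ ≤ K * ‖Φ σ τ x - Φ σ τ x'‖ := by
            simpa only [dist_eq_norm] using (hlip σ).dist_le_mul _ _
        _ ≤ K * (‖Φ σ τ x - x - (Φ σ τ x' - x')‖ + ‖x - x'‖) := by
            gcongr
            exact (norm_add_le _ _).trans_eq' (by congr 1; abel)
        _ = _ := by ring
  rwa [gronwallBound_zero_eq_mul, mul_comm (K : ℝ), mul_assoc, mul_gronwallBound_zero_one,
    mul_comm] at hgron

lemma norm_sub_sub_le (hΦ : IsFlow b Φ) (hlip : ∀ t, LipschitzWith K (b t)) (τ s : ℝ) (x x' : E) :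
    ‖Φ s τ x - x - (Φ s τ x' - x')‖ ≤ (exp (K * |s - τ|) - 1) * ‖x - x'‖ := by
  rcases le_total τ s with h | h
  · simpa [abs_of_nonneg (sub_nonneg.2 h)] using hΦ.norm_sub_sub_le_of_le hlip h x x'
  · simpa [abs_of_nonpos (sub_nonpos.2 h), neg_add_eq_sub] using
      hΦ.reverse.norm_sub_sub_le_of_le (fun t => (hlip (-t)).neg) (neg_le_neg h) x x'

lemma norm_sub_le (hΦ : IsFlow b Φ) (hlip : ∀ t, LipschitzWith K (b t)) (τ s : ℝ) (x x' : E) :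
    ‖Φ s τ x - Φ s τ x'‖ ≤ exp (K * |s - τ|) * ‖x - x'‖ := by
  calc ‖Φ s τ x - Φ s τ x'‖ ≤ ‖Φ s τ x - x - (Φ s τ x' - x')‖ + ‖x - x'‖ := by
        exact (norm_add_le _ _).trans_eq' (by congr 1; abel)
    _ ≤ exp (K * |s - τ|) * ‖x - x'‖ := by
        linarith [hΦ.norm_sub_sub_le hlip τ s x x']

lemma hasDerivAt_initialTime (hΦ : IsFlow b Φ) (hlip : ∀ t, LipschitzWith K (b t))
    (t : ℝ) (z : E) :
    HasDerivAt (fun τ => Φ t τ z) (-b t z) t := by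
  set y := fun τ => Φ τ t z
  have hy : HasDerivAt y (b t z) t := by simpa [y, hΦ.apply_self] using hΦ.hasDerivAt t z t
  -- `Φ t τ (y τ) = z`, so comparing `Φ t τ z` with `Φ t τ (y τ)` reduces to the motion of `y`
  have hsplit : ∀ τ, Φ t τ z - Φ t t z - (τ - t) • -b t z
      = (Φ t τ z - z - (Φ t τ (y τ) - y τ)) - (y τ - y t - (τ - t) • b t z) := fun τ => by
    simp only [y, hΦ.apply_apply hlip, hΦ.apply_self, smul_neg]
    abel
  rw [hasDerivAt_iff_isLittleO, funext hsplit]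
  refine IsLittleO.sub ?_ (hasDerivAt_iff_isLittleO.1 hy)
  have hsmall : (fun τ => exp (K * |t - τ|) - 1) =o[𝓝 t] fun _ => (1 : ℝ) :=
    (isLittleO_one_iff ℝ).2 <| by
      have : Continuous fun τ => exp (K * |t - τ|) - 1 := by fun_prop
      simpa using this.tendsto t
  have hmove : (fun τ => z - y τ) =O[𝓝 t] fun τ => τ - t := by
    simpa [y, hΦ.apply_self] using hy.isBigO_sub.neg_left
  refine (isBigO_of_le _ fun τ => ?_).trans_isLittleO
    ((hsmall.smul_isBigO hmove).congr_right fun τ => one_smul ℝ (τ - t))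
  rw [norm_smul, Real.norm_of_nonneg (by simp; positivity)]
  exact hΦ.norm_sub_sub_le hlip τ t z (y τ)

lemma norm_sub_sub_linearized_le (hΦ : IsFlow b Φ) (hlip : ∀ t, LipschitzWith K (b t))
    {t s₀ : ℝ} (hts : t ≤ s₀) {z h : E} {W : ℝ → E →L[ℝ] E} (hWt : W t = 1)
    (hW : ∀ σ, HasDerivAt W (fderiv ℝ (b σ) (Φ σ t z) * W σ) σ) {ε δ : ℝ} (hε : 0 ≤ ε)
    (hrem : ∀ σ ∈ Icc t s₀, ∀ v : E, ‖v‖ < δ →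
      ‖b σ (Φ σ t z + v) - b σ (Φ σ t z) - fderiv ℝ (b σ) (Φ σ t z) v‖ ≤ ε * ‖v‖)
    (hh : exp (K * (s₀ - t)) * ‖h‖ < δ) :
    ‖Φ s₀ t (z + h) - Φ s₀ t z - W s₀ h‖
      ≤ ε * exp (K * (s₀ - t)) * ‖h‖ * gronwallBound 0 K 1 (s₀ - t) := by
  set A := fun σ => fderiv ℝ (b σ) (Φ σ t z)
  have hderiv : ∀ σ, HasDerivAt (fun σ => Φ σ t (z + h) - Φ σ t z - W σ h)
      (b σ (Φ σ t (z + h)) - b σ (Φ σ t z) - (A σ * W σ) h) σ := fun σ =>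
    ((hΦ.hasDerivAt t (z + h) σ).sub (hΦ.hasDerivAt t z σ)).sub <| by
      simpa using (hW σ).clm_apply (hasDerivAt_const σ h)
  rw [← gronwallBound_zero_eq_mul]
  refine norm_le_gronwallBound_of_hasDerivAt hts hderiv (by simp [hΦ.apply_self, hWt])
    fun σ hσ => ?_
  set v := Φ σ t (z + h) - Φ σ t z
  have hv : ‖v‖ ≤ exp (K * (s₀ - t)) * ‖h‖ := by
    refine (hΦ.norm_sub_le hlip t σ _ _).trans ?_
    rw [add_sub_cancel_left, abs_of_nonneg (sub_nonneg.2 hσ.1)]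
    gcongr
    exact hσ.2.le
  have hsplit : b σ (Φ σ t (z + h)) - b σ (Φ σ t z) - (A σ * W σ) h
      = (b σ (Φ σ t z + v) - b σ (Φ σ t z) - A σ v) + A σ (v - W σ h) := by
    simp only [v, add_sub_cancel, map_sub, ContinuousLinearMap.mul_def,
      ContinuousLinearMap.comp_apply]
    abel
  rw [hsplit]
  calc _ ≤ ε * ‖v‖ + K * ‖v - W σ h‖ :=
        (norm_add_le _ _).trans <| add_le_add (hrem σ (Ico_subset_Icc_self hσ) v (hv.trans_lt hh))
          (((A σ).le_opNorm _).trans (by gcongr; exact norm_fderiv_le_of_lipschitz ℝ (hlip σ)))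
    _ ≤ K * ‖v - W σ h‖ + ε * exp (K * (s₀ - t)) * ‖h‖ := by
        linarith [mul_le_mul_of_nonneg_left hv hε]

lemma differentiableAt_of_le [CompleteSpace E] (hΦ : IsFlow b Φ)
    (hb : ContDiff ℝ 1 fun p : ℝ × E => b p.1 p.2) (hlip : ∀ t, LipschitzWith K (b t))
    {t s₀ : ℝ} (hts : t ≤ s₀) (z : E) : DifferentiableAt ℝ (Φ s₀ t) z := by
  have hγ : Continuous fun σ => Φ σ t z :=
    continuous_iff_continuousAt.2 fun σ => (hΦ.hasDerivAt t z σ).continuousAt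
  obtain ⟨W, hWt, hW⟩ := exists_hasDerivAt_eq_mul
    ((continuous_fderiv_of_contDiff_uncurry hb).comp (continuous_id.prodMk hγ))
    (fun σ => norm_fderiv_le_of_lipschitz ℝ (hlip σ)) t (1 : E →L[ℝ] E)
  refine ⟨W s₀, hasFDerivAt_iff_isLittleO_nhds_zero.2 <| isLittleO_iff.2 fun c hc => ?_⟩
  set R := exp (K * (s₀ - t))
  set M := R * gronwallBound 0 K 1 (s₀ - t)
  have hM : 0 ≤ M := mul_nonneg (exp_pos _).le <| by
    simpa [gronwallBound_x0] using
      gronwallBound_mono le_rfl zero_le_one K.coe_nonneg (sub_nonneg.2 hts)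
  obtain ⟨δ, hδ, hrem⟩ := exists_norm_sub_sub_fderiv_le hb hγ isCompact_Icc
    (div_pos hc (by linarith : 0 < M + 1))
  filter_upwards [ball_mem_nhds (0 : E) (div_pos hδ (exp_pos (K * (s₀ - t))))] with h hh
  rw [mem_ball_zero_iff, lt_div_iff₀ (exp_pos _), mul_comm] at hh
  calc _ ≤ c / (M + 1) * R * ‖h‖ * gronwallBound 0 K 1 (s₀ - t) :=
        hΦ.norm_sub_sub_linearized_le hlip hts hWt hW (div_pos hc (by linarith)).le hrem hh
    _ = c * (M / (M + 1)) * ‖h‖ := by ring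
    _ ≤ c * ‖h‖ := by
        gcongr
        exact mul_le_of_le_one_right hc.le ((div_le_one (by linarith)).2 (by linarith))

lemma differentiableAt [CompleteSpace E] (hΦ : IsFlow b Φ)
    (hb : ContDiff ℝ 1 fun p : ℝ × E => b p.1 p.2) (hlip : ∀ t, LipschitzWith K (b t))
    (s t : ℝ) (z : E) : DifferentiableAt ℝ (Φ s t) z := by
  rcases le_total t s with h | h
  · exact hΦ.differentiableAt_of_le hb hlip h z
  · simpa using hΦ.reverse.differentiableAt_of_le
      (hb.comp (contDiff_fst.neg.prodMk contDiff_snd)).neg (fun t => (hlip (-t)).neg)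
      (neg_le_neg h) z

lemma hasDerivAt_comp_initialTime (hΦ : IsFlow b Φ) (hlip : ∀ t, LipschitzWith K (b t))
    {g : E → F} {s t : ℝ} {z : E} (hg : DifferentiableAt ℝ (fun y => g (Φ s t y)) z) :
    HasDerivAt (fun τ => g (Φ s τ z)) (-fderiv ℝ (fun y => g (Φ s t y)) z (b t z)) t := by
  have hg' :
      HasFDerivAt (fun y => g (Φ s t y)) (fderiv ℝ (fun y => g (Φ s t y)) z) (Φ t t z) := by
    rw [hΦ.apply_self]
    exact hg.hasFDerivAt
  simpa [Function.comp_def, hΦ.apply_apply hlip] using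
    hg'.comp_hasDerivAt t (hΦ.hasDerivAt_initialTime hlip t z)

end IsFlow

end Flow

section Divergence

variable {n : ℕ}

lemma EuclideanSpace.sum_smul_single (x : EuclideanSpace ℝ (Fin n)) :
    ∑ i, x i • EuclideanSpace.single i (1 : ℝ) = x := by
  ext j
  simp [Pi.single_apply]

/-- Leibniz rule for the divergence: `div (g v) = ∇g · v + g div v`. -/
lemma sum_fderiv_mul_apply_single {v : EuclideanSpace ℝ (Fin n) → EuclideanSpace ℝ (Fin n)}
    {g : EuclideanSpace ℝ (Fin n) → ℝ} {z : EuclideanSpace ℝ (Fin n)}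
    (hv : DifferentiableAt ℝ v z) (hg : DifferentiableAt ℝ g z) :
    ∑ i, fderiv ℝ (fun y => v y i * g y) z (EuclideanSpace.single i 1)
      = fderiv ℝ g z (v z) + (∑ i, fderiv ℝ v z (EuclideanSpace.single i 1) i) * g z := by
  have hterm : ∀ i, fderiv ℝ (fun y => v y i * g y) z (EuclideanSpace.single i 1)
      = v z i * fderiv ℝ g z (EuclideanSpace.single i 1)
        + fderiv ℝ v z (EuclideanSpace.single i 1) i * g z := fun i => by
    have hvi := (EuclideanSpace.proj i).hasFDerivAt.comp z hv.hasFDerivAt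
    rw [HasFDerivAt.fderiv (f := fun y => v y i * g y) (hvi.mul hg.hasFDerivAt)]
    simp [mul_comm]
  conv_rhs => rw [← EuclideanSpace.sum_smul_single (v z)]
  simp only [hterm, Finset.sum_add_distrib, map_sum, map_smul, smul_eq_mul, Finset.sum_mul]

end Divergence

/-- Representation formula along characteristics: if `div_z b = -c` then
`f(t,z) = e^{ct} f⁰(Φ(0;t,z))` solves `∂ₜ f + div_z (b f) = 0`, `f(0,·)=f⁰`. -/
theorem stmt5 (n : ℕ)
    (b : ℝ → EuclideanSpace ℝ (Fin n) → EuclideanSpace ℝ (Fin n))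
    (hb : ContDiff ℝ 1 (fun p : ℝ × EuclideanSpace ℝ (Fin n) => b p.1 p.2))
    (K : NNReal) (hlip : ∀ t, LipschitzWith K (b t))
    (Φ : ℝ → ℝ → EuclideanSpace ℝ (Fin n) → EuclideanSpace ℝ (Fin n))
    (hΦself : ∀ t z, Φ t t z = z)
    (hΦ : ∀ t z s, HasDerivAt (fun s => Φ s t z) (b s (Φ s t z)) s)
    (c : ℝ)
    (hdiv : ∀ t z, ∑ i, (fderiv ℝ (b t) z (EuclideanSpace.single i 1)) i = -c)
    (f0 : EuclideanSpace ℝ (Fin n) → ℝ) (hf0 : ContDiff ℝ 1 f0)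
    (f : ℝ → EuclideanSpace ℝ (Fin n) → ℝ)
    (hf : f = fun t z => Real.exp (c * t) * f0 (Φ 0 t z)) :
    (∀ z, f 0 z = f0 z) ∧
    ∀ t z, deriv (fun τ => f τ z) t
        + ∑ i, fderiv ℝ (fun y => (b t y) i * f t y) z (EuclideanSpace.single i 1) = 0 := by
  have hflow : IsFlow b Φ := ⟨hΦself, hΦ⟩
  subst hf
  refine ⟨fun z => by simp [hΦself], fun t z => ?_⟩
  have hg : DifferentiableAt ℝ (fun y => f0 (Φ 0 t y)) z :=
    (hf0.differentiable one_ne_zero _).comp z (hflow.differentiableAt hb hlip 0 t z)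
  have hbt : DifferentiableAt ℝ (b t) z :=
    (hasFDerivAt_of_contDiff_uncurry hb t z).differentiableAt
  have htime : HasDerivAt (fun τ => exp (c * τ) * f0 (Φ 0 τ z))
      (c * exp (c * t) * f0 (Φ 0 t z) - exp (c * t) * fderiv ℝ (fun y => f0 (Φ 0 t y)) z (b t z))
      t := by
    refine (((hasDerivAt_id t).const_mul c).exp.mul
      (hflow.hasDerivAt_comp_initialTime hlip hg)).congr_deriv ?_
    simp only [id, mul_one]
    ring
  beta_reduce
  rw [htime.deriv, sum_fderiv_mul_apply_single hbt (hg.const_mul _), hdiv, fderiv_const_mul hg]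
  simp only [smul_apply, smul_eq_mul]
  ring
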